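/- Every finite simple graph is isomorphic to an induced subgraph of some distance critical simple graph. -/

import Mathlib

/-- A graph is *distance critical* if for every vertex `v` there is a pair of vertices of
`G − v` whose distance in `G − v` differs from their distance in `G`
(distances are `ℕ∞`-valued, `⊤` when there is no connecting path). -/
def IsDistanceCritical {V : Type*} (G : SimpleGraph V) : Prop :=
  ∀ v : V, ∃ x y : ({v}ᶜ : Set V),
    (G.induce ({v}ᶜ : Set V)).edist x y ≠ G.edist (x : V) (y : V)

/-!
Attach to every vertex `v` of `G` a pentagon through `v`. In the resulting graph every vertex `w`
is the unique common neighbour of its two pentagon neighbours, which are non-adjacent and hence at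
distance 2; deleting `w` pushes their distance above 2.
-/

open SimpleGraph

section

variable {V : Type*}

theorem isDistanceCritical_of_forall_commonNeighbors_eq_singleton {G : SimpleGraph V}
    (h : ∀ v, ∃ x y, x ≠ y ∧ ¬G.Adj x y ∧ G.commonNeighbors x y = {v}) :
    IsDistanceCritical G := by
  intro v
  obtain ⟨x, y, hne, hxy, hcommon⟩ := h v
  have hv : v ∈ G.commonNeighbors x y := hcommon ▸ rfl
  obtain ⟨hxv, hyv⟩ := G.mem_commonNeighbors.mp hv
  refine ⟨⟨x, hxv.ne⟩, ⟨y, hyv.ne⟩, ?_⟩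
  rw [edist_eq_two_iff.mpr ⟨hne, hxy, ⟨v, hv⟩⟩, Ne, edist_eq_two_iff]
  rintro ⟨-, -, w, hw⟩
  have hw' : (w : V) ∈ G.commonNeighbors x y := hw
  rw [hcommon] at hw'
  exact w.2 hw'

/-- `G` on the layer `V × {0}`, with the pentagon `(v, 0), (v, 1), …, (v, 4)` attached at each
vertex `v`. -/
def attachPentagons (G : SimpleGraph V) : SimpleGraph (V × Fin 5) where
  Adj p q := (p.1 = q.1 ∧ (q.2 = p.2 + 1 ∨ p.2 = q.2 + 1)) ∨ (p.2 = 0 ∧ q.2 = 0 ∧ G.Adj p.1 q.1)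
  symm := ⟨fun _ _ h => by grind [G.adj_symm]⟩
  loopless := ⟨fun _ h => by grind [G.loopless.irrefl]⟩

theorem attachPentagons_commonNeighbors (G : SimpleGraph V) (v : V) (i : Fin 5) :
    (attachPentagons G).commonNeighbors (v, i - 1) (v, i + 1) = {(v, i)} := by
  ext ⟨w, j⟩
  simp only [mem_commonNeighbors, attachPentagons, Set.mem_singleton_iff, Prod.mk.injEq]
  by_cases hwv : v = w
  · subst hwv
    simp only [true_and, SimpleGraph.irrefl, and_false, or_false]
    revert i j; decide
  · simp only [hwv, false_and, false_or]
    refine iff_of_false (fun ⟨⟨hi, _⟩, hi', _⟩ => ?_) fun h => hwv h.1.symm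
    exact (by decide : ∀ k : Fin 5, k - 1 ≠ k + 1) i (hi.trans hi'.symm)

theorem isDistanceCritical_attachPentagons (G : SimpleGraph V) :
    IsDistanceCritical (attachPentagons G) := by
  refine isDistanceCritical_of_forall_commonNeighbors_eq_singleton fun ⟨v, i⟩ =>
    ⟨(v, i - 1), (v, i + 1), ?_, ?_, attachPentagons_commonNeighbors G v i⟩
  · simp only [ne_eq, Prod.mk.injEq, true_and]
    revert i; decide
  · simp only [attachPentagons, true_and, SimpleGraph.irrefl, and_false, or_false]
    revert i; decide

def attachPentagonsEmbedding (G : SimpleGraph V) : G ↪g attachPentagons G where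
  toFun v := (v, 0)
  inj' _ _ h := (Prod.mk.inj h).1
  map_rel_iff' {a b} := by
    change (attachPentagons G).Adj (a, 0) (b, 0) ↔ G.Adj a b
    simp [attachPentagons]

end

theorem stmt_19 {V : Type} [Fintype V] (G : SimpleGraph V) :
    ∃ (W : Type) (_ : Fintype W) (H : SimpleGraph W),
      IsDistanceCritical H ∧ Nonempty (G ↪g H) :=
  ⟨V × Fin 5, inferInstance, attachPentagons G, isDistanceCritical_attachPentagons G,
    ⟨attachPentagonsEmbedding G⟩⟩
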